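/- Let B ∈ ℝ^{3×3} and A = I + B with det A > 0. Then the matrix (AᵀA)^{1/2} + I is invertible and T(A) = 2Φ(B)·((AᵀA)^{1/2} + I)^{-1}, where T(A) = (AᵀA)^{1/2} − I and Φ(B) = sym B + (1/2)BᵀB. -/

import Mathlib

open Matrix
open scoped Classical

noncomputable def fnorm (A : Matrix (Fin 3) (Fin 3) ℝ) : ℝ :=
  Real.sqrt ((Aᵀ * A).trace)

def SO3 : Set (Matrix (Fin 3) (Fin 3) ℝ) := {Q | Qᵀ * Q = 1 ∧ Q.det = 1}

noncomputable def psdSqrt (M : Matrix (Fin 3) (Fin 3) ℝ) : Matrix (Fin 3) (Fin 3) ℝ :=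
  if h : M.PosSemidef then
    (h.1.eigenvectorUnitary : Matrix (Fin 3) (Fin 3) ℝ) *
      diagonal ((↑) ∘ (Real.sqrt ·) ∘ h.1.eigenvalues) *
      (star h.1.eigenvectorUnitary : Matrix (Fin 3) (Fin 3) ℝ)
  else 0

noncomputable def symM (B : Matrix (Fin 3) (Fin 3) ℝ) : Matrix (Fin 3) (Fin 3) ℝ :=
  (1/2 : ℝ) • (B + Bᵀ)

noncomputable def PhiM (B : Matrix (Fin 3) (Fin 3) ℝ) : Matrix (Fin 3) (Fin 3) ℝ :=
  symM B + (1/2 : ℝ) • (Bᵀ * B)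

noncomputable def TM (A : Matrix (Fin 3) (Fin 3) ℝ) : Matrix (Fin 3) (Fin 3) ℝ :=
  psdSqrt (Aᵀ * A) - 1

theorem stmt3 (B : Matrix (Fin 3) (Fin 3) ℝ) (hA : 0 < (1 + B).det) :
    IsUnit (psdSqrt ((1 + B)ᵀ * (1 + B)) + 1) ∧
    TM (1 + B) = ((2 : ℝ) • PhiM B) * (psdSqrt ((1 + B)ᵀ * (1 + B)) + 1)⁻¹ := by
  set A := 1 + B with hAdef
  have hpsd : (Aᵀ * A).PosSemidef := by
    have := Matrix.posSemidef_conjTranspose_mul_self A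
    simpa using this
  have hS : psdSqrt (Aᵀ * A) = (hpsd.1.eigenvectorUnitary : Matrix (Fin 3) (Fin 3) ℝ) *
      diagonal ((↑) ∘ (Real.sqrt ·) ∘ hpsd.1.eigenvalues) *
      (star hpsd.1.eigenvectorUnitary : Matrix (Fin 3) (Fin 3) ℝ) := by
    rw [psdSqrt, dif_pos hpsd]
  set S := (hpsd.1.eigenvectorUnitary : Matrix (Fin 3) (Fin 3) ℝ) *
      diagonal ((↑) ∘ (Real.sqrt ·) ∘ hpsd.1.eigenvalues) *
      (star hpsd.1.eigenvectorUnitary : Matrix (Fin 3) (Fin 3) ℝ) with hSdef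
  have hSsq : S * S = Aᵀ * A := by
    conv_rhs => rw [hpsd.1.spectral_theorem, Unitary.conjStarAlgAut_apply]
    have hU : (star hpsd.1.eigenvectorUnitary : Matrix (Fin 3) (Fin 3) ℝ) * (hpsd.1.eigenvectorUnitary : Matrix (Fin 3) (Fin 3) ℝ) = 1 := Unitary.coe_star_mul_self _
    rw [hSdef]
    calc _ = (hpsd.1.eigenvectorUnitary : Matrix (Fin 3) (Fin 3) ℝ) *
      (diagonal ((↑) ∘ (Real.sqrt ·) ∘ hpsd.1.eigenvalues) * (star hpsd.1.eigenvectorUnitary : Matrix (Fin 3) (Fin 3) ℝ) * (hpsd.1.eigenvectorUnitary : Matrix (Fin 3) (Fin 3) ℝ) *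
      diagonal ((↑) ∘ (Real.sqrt ·) ∘ hpsd.1.eigenvalues)) *
      (star hpsd.1.eigenvectorUnitary : Matrix (Fin 3) (Fin 3) ℝ) := by simp only [mul_assoc]
      _ = _ := by
        rw [mul_assoc (diagonal _), hU, mul_one, diagonal_mul_diagonal]
        congr 3
        funext i
        simp [Real.mul_self_sqrt (hpsd.eigenvalues_nonneg i)]
  have hSpsd : S.PosSemidef := by
    have := (posSemidef_diagonal_iff.2 (fun i => Real.sqrt_nonneg (hpsd.1.eigenvalues i)) : (diagonal ((↑) ∘ (Real.sqrt ·) ∘ hpsd.1.eigenvalues) : Matrix (Fin 3) (Fin 3) ℝ).PosSemidef).mul_mul_conjTranspose_same (hpsd.1.eigenvectorUnitary : Matrix (Fin 3) (Fin 3) ℝ)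
    simpa [hSdef, Matrix.star_eq_conjTranspose] using this
  have hpd : (S + 1).PosDef := by
    exact Matrix.PosDef.posSemidef_add hSpsd .one
  have hUnit : IsUnit (S + 1) := by
    have := hpd.det_pos
    exact isUnit_iff_isUnit_det _ |>.2 (isUnit_iff_ne_zero.2 (ne_of_gt this))
  have key : (S - 1) * (S + 1) = (2 : ℝ) • PhiM B := by
    have : Aᵀ * A = 1 + ((2 : ℝ) • PhiM B) := by
      simp only [hAdef, PhiM, symM, transpose_add, transpose_one]
      rw [add_mul, mul_add, mul_add, one_mul, mul_one]
      rw [smul_add, smul_smul, smul_smul]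
      norm_num
      abel
    rw [mul_add, sub_mul, sub_mul, mul_one, one_mul, hSsq, this]
    noncomm_ring
  constructor
  · rw [hS]; exact hUnit
  · rw [TM, hS, ← key]
    rw [Matrix.mul_nonsing_inv_cancel_right _ _ ((isUnit_iff_isUnit_det _).1 hUnit)]
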